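/- Let G be a finite group, k ≥ 3 an integer, and Θ a finite group acting on G by automorphisms, acting coordinatewise on G^{k−1}. With ΘS(ḡ) := Σ_{θ∈Θ} S(θ(g₁),…,θ(g_{k−1})) ∈ A_k(G) and U(ḡ) := Σ_{θ∈Θ} Σ_{γ̄∈Θ^{k−1}} S((θ(g₁),γ₁),…,(θ(g_{k−1}),γ_{k−1})) ∈ A_k(G⋊Θ), there is a unique ℂ-linear map Φ_k from the span of {ΘS(ḡ) : ḡ ∈ G^{k−1}} into A_k(G⋊Θ) satisfying Φ_k(ΘS(ḡ)) = |Θ|^{−⌊k/2⌋} · |Θ|^{(1−⌈k/2⌉)/2} · U(ḡ) for all ḡ ∈ G^{k−1}; moreover the span of the ΘS(ḡ) is closed under the product of A_k(G), and Φ_k is multiplicative: Φ_k(x·y) = Φ_k(x)·Φ_k(y) for all x, y in that span. -/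

import Mathlib

open Finset

noncomputable section

/-- 1-indexed access into a `(k-1)`-tuple, with default value `1` out of range. -/
def idx1 {H : Type*} [One H] (k : ℕ) (v : Fin (k - 1) → H) (j : ℕ) : H :=
  if h : j - 1 < k - 1 then v ⟨j - 1, h⟩ else 1

/-- The product of two basis vectors `S(x̄)·S(ȳ)` of the `k`-box space `A_k(H)` of the
group planar algebra `P(H)` (Fact 4.4 of the paper). -/
def basisMul {H : Type*} [Group H] [Fintype H] [DecidableEq H] (k : ℕ)
    (x y : Fin (k - 1) → H) : (Fin (k - 1) → H) →₀ ℂ :=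
  ((((Fintype.card H : ℝ) ^ (((((k + 1) / 2 : ℕ) : ℝ) - 1) / 2) : ℝ) : ℂ) *
      ∏ i ∈ Finset.Icc 2 ((k + 1) / 2),
        (if idx1 k y 1 * idx1 k x (k + 1 - i) = idx1 k y i then (1 : ℂ) else 0)) •
    Finsupp.single
      (fun j : Fin (k - 1) =>
        if (j : ℕ) + 1 ≤ (k + 1) / 2 then idx1 k y 1 * x j else y j) (1 : ℂ)

/-- The bilinear product on the `k`-box space `A_k(H) = ℂ[H^{k−1}]`. -/
def mulAk {H : Type*} [Group H] [Fintype H] [DecidableEq H] (k : ℕ)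
    (a b : (Fin (k - 1) → H) →₀ ℂ) : (Fin (k - 1) → H) →₀ ℂ :=
  a.sum fun x ca => b.sum fun y cb => (ca * cb) • basisMul k x y

/-- The `Θ`-orbit sum `ΘS(ḡ) = Σ_{θ∈Θ} S(θ(g₁),…,θ(g_{k−1})) ∈ A_k(G)`. -/
def thetaS {G Θ : Type*} [Group G] [Group Θ] [Fintype Θ] (φ : Θ →* MulAut G)
    (k : ℕ) (g : Fin (k - 1) → G) : (Fin (k - 1) → G) →₀ ℂ :=
  ∑ θ : Θ, Finsupp.single (fun j => φ θ (g j)) (1 : ℂ)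

variable {G Θ : Type*} [Group G] [Fintype G] [DecidableEq G]
  [Group Θ] [Fintype Θ] [DecidableEq Θ] (φ : Θ →* MulAut G)

/-- The underlying equivalence `G ⋊[φ] Θ ≃ G × Θ`. -/
def sdpEquivProd : (G ⋊[φ] Θ) ≃ G × Θ where
  toFun s := (s.left, s.right)
  invFun p := ⟨p.1, p.2⟩
  left_inv _ := rfl
  right_inv _ := rfl

instance : Fintype (G ⋊[φ] Θ) := Fintype.ofEquiv (G × Θ) (sdpEquivProd φ).symm

instance : DecidableEq (G ⋊[φ] Θ) := (sdpEquivProd φ).decidableEq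

/-- `U(ḡ) = Σ_{θ∈Θ} Σ_{γ̄∈Θ^{k−1}} S((θ(g₁),γ₁),…,(θ(g_{k−1}),γ_{k−1})) ∈ A_k(G⋊Θ)`. -/
def Uel (k : ℕ) (g : Fin (k - 1) → G) : (Fin (k - 1) → G ⋊[φ] Θ) →₀ ℂ :=
  ∑ θ : Θ, ∑ γ : Fin (k - 1) → Θ,
    Finsupp.single (fun j => (⟨φ θ (g j), γ j⟩ : G ⋊[φ] Θ)) (1 : ℂ)

/-!
Write `P = G ⋊ Θ`. A basis tuple of `A_k(P)` is a pair `(x̄, γ̄)` of a `G`-tuple and a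
`Θ`-tuple, and the box product in `P` factors: its `G`-part is the box product in `G` of
`γ'₁ · x̄` with `ȳ`, its `Θ`-part the box product in `Θ` of `γ̄` with `γ̄'`. With
`𝟙 = Σ_γ̄ S(γ̄) ∈ A_k(Θ)` we have `U(ḡ) = ΘS(ḡ) ⊗ 𝟙`, and the twist by `γ'₁` is absorbed by the
orbit sum `ΘS(ḡ)`, so `U(ḡ)·U(h̄) = (ΘS(ḡ)·ΘS(h̄)) ⊗ (𝟙·𝟙)`. Each basis tuple is the output of
exactly `|Θ|^{⌊k/2⌋}` pairs satisfying the delta constraints, so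
`𝟙·𝟙 = |Θ|^{(⌈k/2⌉-1)/2}·|Θ|^{⌊k/2⌋}·𝟙`, and the normalising constant of `Φ_k` is precisely
the inverse of this scalar. Closure of the span of the `ΘS(ḡ)` comes from the `Θ`-equivariance
of the product; both statements pass from generators to the span by bilinearity.
-/

section Idx

variable {k : ℕ}

theorem idx1_of_lt {H : Type*} [One H] (v : Fin (k - 1) → H) {i : ℕ} (h : i - 1 < k - 1) :
    idx1 k v i = v ⟨i - 1, h⟩ :=
  dif_pos h

theorem idx1_succ {H : Type*} [One H] (v : Fin (k - 1) → H) (j : Fin (k - 1)) :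
    idx1 k v (j + 1) = v j :=
  idx1_of_lt v (by simp)

theorem idx1_map {H H' : Type*} [One H] [One H'] {f : H → H'} (hf : f 1 = 1)
    (v : Fin (k - 1) → H) (i : ℕ) : idx1 k (fun j => f (v j)) i = f (idx1 k v i) := by
  unfold idx1; split <;> simp [hf]

theorem idx1_mul {H : Type*} [MulOneClass H] (v w : Fin (k - 1) → H) (i : ℕ) :
    idx1 k (v * w) i = idx1 k v i * idx1 k w i := by
  unfold idx1; split <;> simp

end Idx

theorem LinearMap.eqOn_span₂ {R M N P : Type*} [CommSemiring R] [AddCommMonoid M] [Module R M]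
    [AddCommMonoid N] [Module R N] [AddCommMonoid P] [Module R P] {s : Set M} {t : Set N}
    {B₁ B₂ : M →ₗ[R] N →ₗ[R] P} (h : ∀ x ∈ s, ∀ y ∈ t, B₁ x y = B₂ x y) {x : M} {y : N}
    (hx : x ∈ Submodule.span R s) (hy : y ∈ Submodule.span R t) : B₁ x y = B₂ x y :=
  LinearMap.eqOn_span (f := B₁.flip y) (g := B₂.flip y)
    (fun x' hx' => LinearMap.eqOn_span (f := B₁ x') (g := B₂ x') (h x' hx') hy) hx

section Counting

variable {ι H M : Type*} [Fintype ι] [DecidableEq ι] [Group H] [Fintype H] [DecidableEq H]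
  [AddCommMonoid M] [Module ℂ M]

theorem sum_prod_ite_eq_one (T : Finset ι) :
    ∑ u : ι → H, ∏ j ∈ T, (if u j = 1 then (1 : ℂ) else 0) =
      (Fintype.card H : ℂ) ^ (Fintype.card ι - T.card) := by
  calc ∑ u : ι → H, ∏ j ∈ T, (if u j = 1 then (1 : ℂ) else 0)
      = ∏ j, ∑ t : H, if j ∈ T then (if t = 1 then (1 : ℂ) else 0) else 1 := by
        rw [Fintype.prod_sum]
        exact Finset.sum_congr rfl fun u _ => (Fintype.prod_ite_mem T _).symm
    _ = ∏ j, if j ∈ Tᶜ then (Fintype.card H : ℂ) else 1 := by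
        congr! 1 with j; split_ifs <;> simp_all
    _ = _ := by rw [Fintype.prod_ite_mem, Finset.prod_const, Finset.card_compl]

omit [Group H] [DecidableEq H] [Module ℂ M] in
theorem sum_sum_ite_swap (p : ι → Prop) [DecidablePred p] (F : (ι → H) → (ι → H) → M) :
    ∑ x : ι → H, ∑ y : ι → H, F x y =
      ∑ w : ι → H, ∑ u : ι → H,
        F (fun j => if p j then w j else u j) (fun j => if p j then u j else w j) := by
  let σ : (ι → H) × (ι → H) → (ι → H) × (ι → H) := fun q =>
    (fun j => if p j then q.1 j else q.2 j, fun j => if p j then q.2 j else q.1 j)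
  have hσ : Function.Involutive σ := fun q => by
    ext j <;> by_cases hj : p j <;> simp [σ, hj]
  simp only [← Fintype.sum_prod_type']
  exact Fintype.sum_equiv hσ.toPerm _ _ fun q => by
    congr 1 <;> ext j <;> by_cases hj : p j <;> simp [σ, hj]

theorem sum_sum_prod_ite_smul (p : ι → Prop) [DecidablePred p] (T : Finset ι)
    (hT : ∀ j ∈ T, p j) (f : (ι → H) → ι → H) (F : (ι → H) → M) :
    ∑ x : ι → H, ∑ y : ι → H, (∏ j ∈ T, if y j = f x j then (1 : ℂ) else 0) •
        F (fun j => if p j then x j else y j) =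
      (Fintype.card H : ℂ) ^ (Fintype.card ι - T.card) • ∑ w, F w := by
  have translate : ∀ x, ∑ y : ι → H, (∏ j ∈ T, if y j = f x j then (1 : ℂ) else 0) •
        F (fun j => if p j then x j else y j) =
      ∑ y : ι → H, (∏ j ∈ T, if y j = 1 then (1 : ℂ) else 0) •
        F (fun j => if p j then x j else y j) := by
    intro x
    let c : ι → H := fun j => if j ∈ T then (f x j)⁻¹ else 1
    refine Fintype.sum_equiv (Equiv.mulRight c) _ _ fun y => ?_
    change _ = (∏ j ∈ T, if (y * c) j = 1 then (1 : ℂ) else 0) •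
      F (fun j => if p j then x j else (y * c) j)
    congr 1
    · refine Finset.prod_congr rfl fun j hj => ?_
      rw [Pi.mul_apply, show c j = (f x j)⁻¹ from if_pos hj]
      simp only [mul_inv_eq_one]
    · congr 1; ext j
      by_cases hp : p j
      · simp only [hp, if_true]
      · have hj : j ∉ T := fun hj => hp (hT j hj)
        simp only [hp, if_false, Pi.mul_apply, c, hj, mul_one]
  rw [Finset.sum_congr rfl fun x _ => translate x, sum_sum_ite_swap p, ← sum_prod_ite_eq_one T,
    Finset.sum_smul, Finset.sum_comm]
  refine Finset.sum_congr rfl fun u _ => ?_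
  rw [Finset.smul_sum]
  refine Finset.sum_congr rfl fun w _ => ?_
  congr 1
  · exact Finset.prod_congr rfl fun j hj => by simp only [hT j hj, if_true]
  · congr 1; ext j; by_cases hp : p j <;> simp only [hp, if_true, if_false]

end Counting

theorem image_filter_fin_succ {n : ℕ} {s : Finset ℕ} (hs : ∀ i ∈ s, 1 ≤ i ∧ i ≤ n) :
    (univ.filter fun j : Fin n => (j : ℕ) + 1 ∈ s).image (fun j : Fin n => (j : ℕ) + 1) = s := by
  ext i
  simp only [Finset.mem_image, Finset.mem_filter, Finset.mem_univ, true_and]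
  constructor
  · rintro ⟨j, hj, rfl⟩; exact hj
  · intro hi
    have := hs i hi
    exact ⟨⟨i - 1, by omega⟩, by simpa [Nat.sub_add_cancel this.1] using hi,
      Nat.sub_add_cancel this.1⟩

section BoxSpace

variable {H : Type*} [Group H] [Fintype H] [DecidableEq H] (k : ℕ)

def mulAkₗ :
    ((Fin (k - 1) → H) →₀ ℂ) →ₗ[ℂ] ((Fin (k - 1) → H) →₀ ℂ) →ₗ[ℂ] ((Fin (k - 1) → H) →₀ ℂ) :=
  Finsupp.linearCombination ℂ fun x => Finsupp.linearCombination ℂ (basisMul k x)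

theorem mulAkₗ_apply (a b : (Fin (k - 1) → H) →₀ ℂ) : mulAkₗ k a b = mulAk k a b := by
  simp only [mulAkₗ, mulAk, Finsupp.linearCombination_apply, Finsupp.sum, LinearMap.sum_apply,
    LinearMap.smul_apply, Finset.smul_sum, smul_smul]

theorem mulAk_single_single (x y : Fin (k - 1) → H) :
    mulAk k (Finsupp.single x 1) (Finsupp.single y 1) = basisMul k x y := by
  simp only [← mulAkₗ_apply, mulAkₗ, Finsupp.linearCombination_single, one_smul]

theorem mulAk_sum_sum {ι κ : Type*} (s : Finset ι) (t : Finset κ)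
    (a : ι → (Fin (k - 1) → H) →₀ ℂ) (b : κ → (Fin (k - 1) → H) →₀ ℂ) :
    mulAk k (∑ i ∈ s, a i) (∑ j ∈ t, b j) = ∑ i ∈ s, ∑ j ∈ t, mulAk k (a i) (b j) := by
  simp only [← mulAkₗ_apply, map_sum, LinearMap.sum_apply]
  exact Finset.sum_comm

variable (H) in
def boxScalar : ℂ := (((Fintype.card H : ℝ) ^ (((((k + 1) / 2 : ℕ) : ℝ) - 1) / 2) : ℝ) : ℂ)

theorem basisMul_eq (x y : Fin (k - 1) → H) :
    basisMul k x y = boxScalar H k •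
      (∏ i ∈ Icc 2 ((k + 1) / 2),
        if idx1 k y 1 * idx1 k x (k + 1 - i) = idx1 k y i then (1 : ℂ) else 0) •
      Finsupp.single (fun j : Fin (k - 1) =>
        if (j : ℕ) + 1 ≤ (k + 1) / 2 then idx1 k y 1 * x j else y j) 1 :=
  mul_smul _ _ _

theorem sum_sum_basisMul (hk : 2 ≤ k) :
    ∑ x : Fin (k - 1) → H, ∑ y, basisMul k x y =
      (boxScalar H k * (Fintype.card H : ℂ) ^ (k / 2)) • ∑ w, Finsupp.single w 1 := by
  set m := (k + 1) / 2
  have hIcc : ∀ i ∈ Icc 2 m, 1 ≤ i ∧ i ≤ k - 1 := fun i hi => by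
    simp only [Finset.mem_Icc] at hi; omega
  set T := univ.filter fun j : Fin (k - 1) => (j : ℕ) + 1 ∈ Icc 2 m
  have untwist : ∀ y : Fin (k - 1) → H,
      ∑ x, (∏ i ∈ Icc 2 m, if idx1 k y 1 * idx1 k x (k + 1 - i) = idx1 k y i then (1 : ℂ) else 0) •
        Finsupp.single (fun j : Fin (k - 1) => if (j : ℕ) + 1 ≤ m then idx1 k y 1 * x j else y j)
          (1 : ℂ) =
      ∑ x, (∏ i ∈ Icc 2 m, if idx1 k x (k + 1 - i) = idx1 k y i then (1 : ℂ) else 0) •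
        Finsupp.single (fun j : Fin (k - 1) => if (j : ℕ) + 1 ≤ m then x j else y j) (1 : ℂ) := by
    intro y
    refine Fintype.sum_equiv (Equiv.mulLeft fun _ => idx1 k y 1) _ _ fun x => ?_
    refine congrArg₂ _ (Finset.prod_congr rfl fun i hi => ?_) rfl
    have hi' := Finset.mem_Icc.mp hi
    rw [Equiv.coe_mulLeft, idx1_mul, idx1_of_lt (fun _ => idx1 k y 1) (i := k + 1 - i) (by omega)]
  have reflect : ∀ x y : Fin (k - 1) → H,
      (∏ i ∈ Icc 2 m, if idx1 k x (k + 1 - i) = idx1 k y i then (1 : ℂ) else 0) =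
        ∏ j ∈ T, if y j = idx1 k x (k - j) then (1 : ℂ) else 0 := by
    intro x y
    rw [← image_filter_fin_succ hIcc, Finset.prod_image (fun _ _ _ _ h => Fin.ext (by omega))]
    refine Finset.prod_congr rfl fun j _ => ?_
    simp only [idx1_succ, Nat.add_sub_add_right, eq_comm]
  have hT : T.card = m + 1 - 2 := by
    rw [← Nat.card_Icc 2 m, ← image_filter_fin_succ hIcc,
      Finset.card_image_of_injective _ fun _ _ h => Fin.ext (by omega)]
  simp_rw [basisMul_eq, ← Finset.smul_sum]
  rw [Finset.sum_comm, Finset.sum_congr rfl fun y _ => untwist y, Finset.sum_comm]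
  simp_rw [reflect]
  rw [sum_sum_prod_ite_smul (fun j : Fin (k - 1) => (j : ℕ) + 1 ≤ m) T
    (fun j hj => by simp only [T, Finset.mem_filter, Finset.mem_Icc] at hj; omega)
    (fun x j => idx1 k x (k - j))
    (fun w => Finsupp.single w (1 : ℂ)), Fintype.card_fin, hT, mul_smul,
    show k - 1 - (m + 1 - 2) = k / 2 by omega]

end BoxSpace

section Semidirect

variable (k : ℕ)

def pairTensor : ((Fin (k - 1) → G) →₀ ℂ) →ₗ[ℂ] ((Fin (k - 1) → Θ) →₀ ℂ) →ₗ[ℂ]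
    ((Fin (k - 1) → G ⋊[φ] Θ) →₀ ℂ) :=
  Finsupp.linearCombination ℂ fun x => Finsupp.linearCombination ℂ fun γ =>
    Finsupp.single (fun j => (⟨x j, γ j⟩ : G ⋊[φ] Θ)) 1

omit [Fintype G] [DecidableEq G] [Fintype Θ] [DecidableEq Θ] in
theorem pairTensor_smul_single (a b : ℂ) (x : Fin (k - 1) → G) (γ : Fin (k - 1) → Θ) :
    pairTensor φ k (a • Finsupp.single x 1) (b • Finsupp.single γ 1) =
      (a * b) • Finsupp.single (fun j => (⟨x j, γ j⟩ : G ⋊[φ] Θ)) 1 := by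
  simp only [pairTensor, map_smul, LinearMap.smul_apply, Finsupp.linearCombination_single,
    one_smul, smul_smul]
  rw [mul_comm]

omit [Fintype G] [DecidableEq G] [Fintype Θ] [DecidableEq Θ] in
theorem idx1_semidirect (x : Fin (k - 1) → G) (γ : Fin (k - 1) → Θ) (i : ℕ) :
    idx1 k (fun j => (⟨x j, γ j⟩ : G ⋊[φ] Θ)) i = ⟨idx1 k x i, idx1 k γ i⟩ := by
  unfold idx1; split <;> rfl

omit [DecidableEq G] [DecidableEq Θ] in
theorem boxScalar_semidirect :
    boxScalar (G ⋊[φ] Θ) k = boxScalar G k * boxScalar Θ k := by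
  rw [boxScalar, boxScalar, boxScalar, Fintype.card_congr (sdpEquivProd φ), Fintype.card_prod,
    Nat.cast_mul, Real.mul_rpow (Nat.cast_nonneg _) (Nat.cast_nonneg _), Complex.ofReal_mul]

theorem basisMul_semidirect (x y : Fin (k - 1) → G) (γ γ' : Fin (k - 1) → Θ) :
    basisMul k (fun j => (⟨x j, γ j⟩ : G ⋊[φ] Θ)) (fun j => ⟨y j, γ' j⟩) =
      pairTensor φ k (basisMul k (fun j => φ (idx1 k γ' 1) (x j)) y) (basisMul k γ γ') := by
  simp only [basisMul, pairTensor_smul_single]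
  congr 1
  · rw [← boxScalar, ← boxScalar, ← boxScalar, boxScalar_semidirect,
      mul_mul_mul_comm, ← Finset.prod_mul_distrib]
    congr 1
    refine Finset.prod_congr rfl fun i _ => ?_
    simp only [idx1_semidirect, idx1_map (map_one (φ (idx1 k γ' 1))), ite_zero_mul_ite_zero,
      mul_one, SemidirectProduct.mul_def, SemidirectProduct.ext_iff]
  · congr 1; funext j
    split_ifs <;> simp only [idx1_semidirect, SemidirectProduct.mul_def]

omit [Fintype G] [DecidableEq G] [DecidableEq Θ] in
theorem Uel_eq_pairTensor (g : Fin (k - 1) → G) :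
    Uel φ k g = pairTensor φ k (thetaS φ k g) (∑ γ, Finsupp.single γ 1) := by
  simp only [Uel, thetaS, map_sum, LinearMap.sum_apply, pairTensor,
    Finsupp.linearCombination_single, one_smul]
  exact Finset.sum_comm

omit [DecidableEq Θ] in
theorem thetaS_mul_thetaS_eq_sum (τ : Θ) (g h : Fin (k - 1) → G) :
    mulAk k (thetaS φ k g) (thetaS φ k h) =
      ∑ θ, ∑ θ', basisMul k (fun j => φ τ (φ θ (g j))) (fun j => φ θ' (h j)) := by
  simp only [thetaS, mulAk_sum_sum, mulAk_single_single]
  exact (Fintype.sum_equiv (Equiv.mulLeft τ) _ _ fun θ => by simp [MulAut.mul_apply]).symm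

theorem mulAk_Uel_Uel (g h : Fin (k - 1) → G) :
    mulAk k (Uel φ k g) (Uel φ k h) =
      pairTensor φ k (mulAk k (thetaS φ k g) (thetaS φ k h)) (∑ γ, ∑ γ', basisMul k γ γ') := by
  have hU : ∀ g, Uel φ k g = ∑ γ : Fin (k - 1) → Θ, ∑ θ : Θ,
      Finsupp.single (fun j => (⟨φ θ (g j), γ j⟩ : G ⋊[φ] Θ)) 1 := fun g => Finset.sum_comm
  simp only [hU, mulAk_sum_sum, map_sum]
  refine Finset.sum_congr rfl fun γ _ => Finset.sum_congr rfl fun γ' _ => ?_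
  simp only [thetaS_mul_thetaS_eq_sum φ k (idx1 k γ' 1), map_sum, LinearMap.sum_apply,
    mulAk_single_single, basisMul_semidirect]

omit [Fintype Θ] [DecidableEq Θ] in
theorem basisMul_act (σ : Θ) (x y : Fin (k - 1) → G) :
    basisMul k (fun j => φ σ (x j)) (fun j => φ σ (y j)) =
      Finsupp.mapDomain (fun v j => φ σ (v j)) (basisMul k x y) := by
  simp only [basisMul, Finsupp.mapDomain_smul, Finsupp.mapDomain_single,
    idx1_map (map_one (φ σ)), ← map_mul, (φ σ).injective.eq_iff]
  congr 2; funext j; split_ifs <;> rfl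

omit [DecidableEq Θ] in
theorem sum_mapDomain_basisMul_mem_span (x y : Fin (k - 1) → G) :
    ∑ σ : Θ, Finsupp.mapDomain (fun v j => φ σ (v j)) (basisMul k x y) ∈
      Submodule.span ℂ (Set.range (thetaS φ k)) := by
  simp only [basisMul, Finsupp.mapDomain_smul, Finsupp.mapDomain_single, ← Finset.smul_sum]
  exact Submodule.smul_mem _ _ (Submodule.subset_span ⟨_, rfl⟩)

omit [DecidableEq Θ] in
theorem mulAk_thetaS_mem_span (g h : Fin (k - 1) → G) :
    mulAk k (thetaS φ k g) (thetaS φ k h) ∈ Submodule.span ℂ (Set.range (thetaS φ k)) := by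
  have reindex : ∀ σ : Θ, ∑ θ, basisMul k (fun j => φ θ (g j)) (fun j => φ σ (h j)) =
      ∑ τ, Finsupp.mapDomain (fun v j => φ σ (v j)) (basisMul k (fun j => φ τ (g j)) h) :=
    fun σ => (Fintype.sum_equiv (Equiv.mulLeft σ) _ _ fun τ => by
      simp [← basisMul_act, MulAut.mul_apply]).symm
  simp only [thetaS, mulAk_sum_sum, mulAk_single_single]
  rw [Finset.sum_comm, Finset.sum_congr rfl fun σ _ => reindex σ, Finset.sum_comm]
  exact Submodule.sum_mem _ fun τ _ => sum_mapDomain_basisMul_mem_span φ k _ _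

variable (Θ) in
def phiScalar : ℂ :=
  (((Fintype.card Θ : ℝ) ^ (-((k / 2 : ℕ) : ℝ)) *
    (Fintype.card Θ : ℝ) ^ ((1 - (((k + 1) / 2 : ℕ) : ℝ)) / 2) : ℝ) : ℂ)

omit [DecidableEq Θ] in
theorem phiScalar_mul_boxScalar :
    phiScalar Θ k * (boxScalar Θ k * (Fintype.card Θ : ℂ) ^ (k / 2)) = 1 := by
  have hΘ : (0 : ℝ) < Fintype.card Θ := by exact_mod_cast Fintype.card_pos
  rw [phiScalar, boxScalar, ← Complex.ofReal_natCast, ← Complex.ofReal_pow, ← Complex.ofReal_mul,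
    ← Complex.ofReal_mul, ← Real.rpow_natCast, ← Real.rpow_add hΘ, ← Real.rpow_add hΘ,
    ← Real.rpow_add hΘ, ← Complex.ofReal_one]
  congr 1
  convert Real.rpow_zero _ using 2
  ring

def phiMap : ((Fin (k - 1) → G) →₀ ℂ) →ₗ[ℂ] ((Fin (k - 1) → G ⋊[φ] Θ) →₀ ℂ) :=
  phiScalar Θ k • (pairTensor φ k).flip (∑ γ, Finsupp.single γ 1)

omit [Fintype G] [DecidableEq G] [DecidableEq Θ] in
theorem phiMap_thetaS (g : Fin (k - 1) → G) :
    phiMap φ k (thetaS φ k g) = phiScalar Θ k • Uel φ k g := by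
  rw [Uel_eq_pairTensor]; rfl

theorem phiMap_mulAk_thetaS (hk : 2 ≤ k) (g h : Fin (k - 1) → G) :
    phiMap φ k (mulAk k (thetaS φ k g) (thetaS φ k h)) =
      mulAk k (phiMap φ k (thetaS φ k g)) (phiMap φ k (thetaS φ k h)) := by
  have hUU := mulAk_Uel_Uel φ k g h
  rw [sum_sum_basisMul k hk, map_smul] at hUU
  calc phiMap φ k (mulAk k (thetaS φ k g) (thetaS φ k h))
      = (phiScalar Θ k * phiScalar Θ k) • mulAk k (Uel φ k g) (Uel φ k h) := by
        rw [hUU, smul_smul, mul_assoc, phiScalar_mul_boxScalar, mul_one]; rfl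
    _ = _ := by
        simp only [phiMap_thetaS, ← mulAkₗ_apply, map_smul, LinearMap.smul_apply, smul_smul]

omit [DecidableEq Θ] in
theorem mulAk_mem_span {x y : (Fin (k - 1) → G) →₀ ℂ}
    (hx : x ∈ Submodule.span ℂ (Set.range (thetaS φ k)))
    (hy : y ∈ Submodule.span ℂ (Set.range (thetaS φ k))) :
    mulAk k x y ∈ Submodule.span ℂ (Set.range (thetaS φ k)) := by
  have hxy := Submodule.apply_mem_map₂ (mulAkₗ k) hx hy
  rw [Submodule.map₂_span_span, mulAkₗ_apply] at hxy
  refine Submodule.span_le.mpr ?_ hxy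
  rintro _ ⟨_, ⟨g, rfl⟩, _, ⟨h, rfl⟩, rfl⟩
  simpa only [mulAkₗ_apply, SetLike.mem_coe] using mulAk_thetaS_mem_span φ k g h

theorem phiMap_mulAk (hk : 2 ≤ k) {x y : (Fin (k - 1) → G) →₀ ℂ}
    (hx : x ∈ Submodule.span ℂ (Set.range (thetaS φ k)))
    (hy : y ∈ Submodule.span ℂ (Set.range (thetaS φ k))) :
    phiMap φ k (mulAk k x y) = mulAk k (phiMap φ k x) (phiMap φ k y) := by
  simpa only [LinearMap.compr₂_apply, LinearMap.compl₁₂_apply, mulAkₗ_apply] using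
    LinearMap.eqOn_span₂ (B₁ := (mulAkₗ k).compr₂ (phiMap φ k))
      (B₂ := (mulAkₗ k).compl₁₂ (phiMap φ k) (phiMap φ k))
      (by rintro _ ⟨g, rfl⟩ _ ⟨h, rfl⟩
          simpa only [LinearMap.compr₂_apply, LinearMap.compl₁₂_apply, mulAkₗ_apply] using
            phiMap_mulAk_thetaS φ k hk g h) hx hy

end Semidirect

/-- **Theorem 4.10 / Definition 4.9 of the paper (multiplicative part)**: the span of
the `ΘS(ḡ)` in `A_k(G)` is closed under the product, there is a unique `ℂ`-linear map
`Φ_k` on this span with `Φ_k(ΘS(ḡ)) = |Θ|^{−⌊k/2⌋}·|Θ|^{(1−⌈k/2⌉)/2}·U(ḡ)`, and this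
`Φ_k` is multiplicative. -/
theorem phi_k_exists_unique_multiplicative (k : ℕ) (hk : 3 ≤ k) :
    (∀ x ∈ Submodule.span ℂ (Set.range (thetaS φ k)),
      ∀ y ∈ Submodule.span ℂ (Set.range (thetaS φ k)),
        mulAk k x y ∈ Submodule.span ℂ (Set.range (thetaS φ k))) ∧
    ∃ Φ : (Submodule.span ℂ (Set.range (thetaS φ k))) →ₗ[ℂ]
        ((Fin (k - 1) → G ⋊[φ] Θ) →₀ ℂ),
      (∀ g : Fin (k - 1) → G,
        Φ ⟨thetaS φ k g, Submodule.subset_span (Set.mem_range_self g)⟩ =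
          (((Fintype.card Θ : ℝ) ^ (-((k / 2 : ℕ) : ℝ)) *
            (Fintype.card Θ : ℝ) ^ ((1 - (((k + 1) / 2 : ℕ) : ℝ)) / 2) : ℝ) : ℂ) •
            Uel φ k g) ∧
      (∀ Φ' : (Submodule.span ℂ (Set.range (thetaS φ k))) →ₗ[ℂ]
          ((Fin (k - 1) → G ⋊[φ] Θ) →₀ ℂ),
        (∀ g : Fin (k - 1) → G,
          Φ' ⟨thetaS φ k g, Submodule.subset_span (Set.mem_range_self g)⟩ =
            (((Fintype.card Θ : ℝ) ^ (-((k / 2 : ℕ) : ℝ)) *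
              (Fintype.card Θ : ℝ) ^ ((1 - (((k + 1) / 2 : ℕ) : ℝ)) / 2) : ℝ) : ℂ) •
              Uel φ k g) → Φ' = Φ) ∧
      (∀ (x y : Submodule.span ℂ (Set.range (thetaS φ k)))
        (hxy : mulAk k x.val y.val ∈
          Submodule.span ℂ (Set.range (thetaS φ k))),
        Φ ⟨mulAk k x.val y.val, hxy⟩ =
          mulAk k (Φ x) (Φ y)) := by
  refine ⟨fun x hx y hy => mulAk_mem_span φ k hx hy,
    phiMap φ k ∘ₗ (Submodule.span ℂ (Set.range (thetaS φ k))).subtype,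
    fun g => phiMap_thetaS φ k g, fun Φ' hΦ' => ?_,
    fun x y _ => phiMap_mulAk φ k (by omega) x.2 y.2⟩
  refine LinearMap.ext_on Submodule.span_span_coe_preimage ?_
  rintro ⟨_, _⟩ ⟨g, rfl⟩
  exact (hΦ' g).trans (phiMap_thetaS φ k g).symm
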